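/- Let A be a noetherian ring and S a profinite set. Then the ring LC(S,A) of locally constant functions S → A is coherent, i.e., every finitely generated ideal of LC(S,A) is finitely presented. -/

import Mathlib

/-!
A finitely generated ideal is the image of some `c ↦ ∑ cᵢ fᵢ : LC(S,A)ⁿ → LC(S,A)`, so it is
enough that the kernel of this map is finitely generated. By compactness `x ↦ (fᵢ x)ᵢ` takes
finitely many values `v`, on clopen fibres `U_v`, and `c` lies in the kernel iff `c x` lies in the
kernel `K_v ⊆ Aⁿ` of `u ↦ ∑ uᵢ vᵢ` for all `x ∈ U_v`. As `c` itself takes only finitely many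
values, such a `c` is an `LC(S,A)`-combination of the relations `1_{U_v} • u` with `u ∈ K_v`, and
these span the kernel over `LC(S,A)` as soon as `u` runs through generators of the finitely
generated `A`-modules `K_v`.
-/

open LinearMap Submodule

theorem Submodule.finitePresentation_of_fg_of_fg_ker {R M : Type*} [CommRing R] [AddCommGroup M]
    [Module R M] {N : Submodule R M} (hN : N.FG)
    (hker : ∀ (n : ℕ) (f : Fin n → M), (ker (Fintype.linearCombination R f)).FG) :
    Module.FinitePresentation R N := by
  obtain ⟨n, f, hf⟩ := fg_iff_exists_fin_generating_family.mp hN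
  let l := Fintype.linearCombination R f
  have : Module.FinitePresentation R (range l) :=
    Module.finitePresentation_of_surjective l.rangeRestrict l.surjective_rangeRestrict
      (by rw [ker_rangeRestrict]; exact hker n f)
  exact .of_equiv (LinearEquiv.ofEq (range l) N (by rw [Fintype.range_linearCombination, hf]))

theorem Submodule.fg_span_image_of_fg {R B M N : Type*} [CommSemiring R] [Semiring B]
    [Algebra R B] [AddCommMonoid M] [Module R M] [AddCommMonoid N] [Module R N] [Module B N]
    [IsScalarTower R B N] (Φ : M →ₗ[R] N) {K : Submodule R M} (hK : K.FG) :
    (span B (Φ '' K)).FG := by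
  obtain ⟨T, hT⟩ := hK.map Φ
  rw [← map_coe, ← hT, span_span_of_tower]
  exact fg_span T.finite_toSet

namespace LocallyConstant

variable {S : Type*} [TopologicalSpace S] {A : Type*} [CommRing A] {ι : Type*}

@[simp]
theorem sum_apply {κ : Type*} (s : Finset κ) (h : κ → LocallyConstant S A) (x : S) :
    (∑ k ∈ s, h k) x = ∑ k ∈ s, h k x :=
  map_sum (evalRingHom x) h s

theorem eq_sum_charFn_smul [CompactSpace S] {P : Type*} (G : LocallyConstant S P)
    (c : ι → LocallyConstant S A) (ψ : P → ι → LocallyConstant S A)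
    (hψ : ∀ x i, ψ (G x) i x = c i x) :
    c = ∑ p ∈ G.range_finite.toFinset, charFn A (G.isLocallyConstant.isClopen_fiber p) • ψ p := by
  classical
  funext i
  ext x
  rw [Finset.sum_apply, sum_apply, Finset.sum_eq_single (G x)]
  · simp [coe_charFn, hψ]
  · intro p _ hp
    simp [coe_charFn, Ne.symm hp]
  · simp

variable (A ι) in
noncomputable def fiberConst {P : Type*} (g : LocallyConstant S P) (p : P) :
    (ι → A) →ₗ[A] ι → LocallyConstant S A :=
  charFn A (g.isLocallyConstant.isClopen_fiber p) • (constₗ A).compLeft ι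

theorem unflip_fiberConst_apply_of_eq [Finite ι] {P : Type*} {g : LocallyConstant S P} {p : P}
    {x : S} (h : g x = p) (u : ι → A) : unflip (fiberConst A ι g p u) x = u := by
  ext i
  simp [unflip, fiberConst, coe_charFn, h]

theorem unflip_fiberConst_apply_of_ne [Finite ι] {P : Type*} {g : LocallyConstant S P} {p : P}
    {x : S} (h : g x ≠ p) (u : ι → A) : unflip (fiberConst A ι g p u) x = 0 := by
  ext i
  simp [unflip, fiberConst, coe_charFn, h]

theorem linearCombination_apply_apply [Fintype ι] (f c : ι → LocallyConstant S A) (x : S) :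
    Fintype.linearCombination (LocallyConstant S A) f c x =
      Fintype.linearCombination A (unflip f x) (unflip c x) := by
  simp [Fintype.linearCombination_apply, unflip]

theorem mem_ker_linearCombination_iff [Fintype ι] {f c : ι → LocallyConstant S A} :
    c ∈ ker (Fintype.linearCombination (LocallyConstant S A) f) ↔
      ∀ x, unflip c x ∈ ker (Fintype.linearCombination A (unflip f x)) := by
  simp only [mem_ker, LocallyConstant.ext_iff, linearCombination_apply_apply, zero_apply]

theorem ker_linearCombination_eq_iSup [CompactSpace S] [Fintype ι]
    (f : ι → LocallyConstant S A) :
    ker (Fintype.linearCombination (LocallyConstant S A) f) =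
      ⨆ v ∈ (unflip f).range_finite.toFinset,
        span (LocallyConstant S A)
          (fiberConst A ι (unflip f) v '' ker (Fintype.linearCombination A v)) := by
  apply le_antisymm
  · intro c hc
    let G : LocallyConstant S ((ι → A) × (ι → A)) :=
      ⟨fun x => (unflip f x, unflip c x),
        (unflip f).isLocallyConstant.prodMk (unflip c).isLocallyConstant⟩
    rw [eq_sum_charFn_smul G c (fun p => fiberConst A ι (unflip f) p.1 p.2)
      fun x => congrFun (unflip_fiberConst_apply_of_eq rfl _)]
    refine sum_mem fun p hp => smul_mem _ _ ?_
    obtain ⟨x, rfl⟩ := (Set.Finite.mem_toFinset _).1 hp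
    refine mem_iSup_of_mem (unflip f x) (mem_iSup_of_mem (by simp) (subset_span ?_))
    exact ⟨unflip c x, mem_ker_linearCombination_iff.1 hc x, rfl⟩
  · refine iSup₂_le fun v _ => span_le.2 ?_
    rintro _ ⟨u, hu, rfl⟩
    refine mem_ker_linearCombination_iff.2 fun x => ?_
    by_cases h : unflip f x = v
    · rwa [unflip_fiberConst_apply_of_eq h, h]
    · rw [unflip_fiberConst_apply_of_ne h]
      exact zero_mem _

theorem fg_ker_linearCombination [CompactSpace S] [IsNoetherianRing A] [Fintype ι]
    (f : ι → LocallyConstant S A) :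
    (ker (Fintype.linearCombination (LocallyConstant S A) f)).FG := by
  rw [ker_linearCombination_eq_iSup]
  exact fg_biSup _ _ fun v _ => fg_span_image_of_fg _ (IsNoetherian.noetherian _)

end LocallyConstant

theorem locallyConstant_coherent
    (A : Type*) [CommRing A] [IsNoetherianRing A]
    (S : Type*) [TopologicalSpace S] [CompactSpace S] :
    ∀ J : Ideal (LocallyConstant S A), J.FG →
      Module.FinitePresentation (LocallyConstant S A) J :=
  fun _ hJ => Submodule.finitePresentation_of_fg_of_fg_ker hJ fun _ f =>
    LocallyConstant.fg_ker_linearCombination f
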